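/- Let F(x,t) = -log f(x,t) where f(x,t) = Σᵢ wᵢ G(xᵢ, Σᵢ + t·Id)(x). If for each i the matrix (Σᵢ + t·Id) - (x-xᵢ)(x-xᵢ)ᵀ is positive semidefinite at a point x, then the Hessian ∇ₓ²F(x,t) is positive semidefinite at x. -/

import Mathlib

/-!
Write `f = ∑ i, w i * gᵢ` with `gᵢ` the Gaussian of covariance `Sᵢ = Σᵢ + t • 1`, positive
definite because `t > 0`. Then `∇²(-log f) = (-∇²f) / f + ∇f ∇fᵀ / f²`, and the second term is
positive semidefinite. For the first, `-∇²gᵢ(x) = gᵢ(x) • (Sᵢ⁻¹ - Sᵢ⁻¹ u uᵀ Sᵢ⁻¹)` with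
`u = x - xᵢ`, which is `gᵢ(x)` times the congruence `Sᵢ⁻¹ (Sᵢ - u uᵀ) Sᵢ⁻¹` of a positive
semidefinite matrix.
-/

/-- Multivariate Gaussian density `G(μ,Σ)(x)` on `ℝ^d`. -/
noncomputable def gauss {d : ℕ} (μ : Fin d → ℝ) (S : Matrix (Fin d) (Fin d) ℝ)
    (x : Fin d → ℝ) : ℝ :=
  ((2 * Real.pi) ^ d * S.det) ^ (-(1:ℝ)/2) *
    Real.exp (-(1/2) * dotProduct (x - μ) (S⁻¹.mulVec (x - μ)))

/-- Hessian matrix of `f : ℝ^d → ℝ` at `x`. -/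
noncomputable def hess {d : ℕ} (f : (Fin d → ℝ) → ℝ) (x : Fin d → ℝ) :
    Matrix (Fin d) (Fin d) ℝ :=
  fun i j => fderiv ℝ (fun y => fderiv ℝ f y (Pi.single j 1)) x (Pi.single i 1)

open Matrix Filter Topology

section

variable {d : ℕ}

noncomputable def dotProductCLM : (Fin d → ℝ) →ₗ[ℝ] (Fin d → ℝ) →L[ℝ] ℝ :=
  LinearMap.toContinuousLinearMap.toLinearMap ∘ₗ dotProductBilin ℝ ℝ

@[simp]
lemma dotProductCLM_apply (a v : Fin d → ℝ) : dotProductCLM a v = a ⬝ᵥ v := rfl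

/-- `g` is the gradient field of `f` near `x` and `H` is the Hessian of `f` at `x`: column `j`
of `H` is the gradient of `g · j` at `x`, as in `hess`. -/
structure HasGradHessAt (f : (Fin d → ℝ) → ℝ) (g : (Fin d → ℝ) → Fin d → ℝ)
    (H : Matrix (Fin d) (Fin d) ℝ) (x : Fin d → ℝ) : Prop where
  eventually_hasFDerivAt : ∀ᶠ y in 𝓝 x, HasFDerivAt f (dotProductCLM (g y)) y
  hasFDerivAt_grad_apply (j : Fin d) : HasFDerivAt (fun y => g y j) (dotProductCLM (Hᵀ j)) x

namespace HasGradHessAt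

variable {f : (Fin d → ℝ) → ℝ} {g : (Fin d → ℝ) → Fin d → ℝ} {H : Matrix (Fin d) (Fin d) ℝ}
  {x : Fin d → ℝ}

theorem hess_eq (h : HasGradHessAt f g H x) : hess f x = H := by
  ext i j
  have hpartial : (fun y => fderiv ℝ f y (Pi.single j 1)) =ᶠ[𝓝 x] fun y => g y j :=
    h.eventually_hasFDerivAt.mono fun y hy => by simp [hy.fderiv]
  simp [hess, ((h.hasFDerivAt_grad_apply j).congr_of_eventuallyEq hpartial).fderiv]

theorem sum {ι : Type*} [Fintype ι] {f : ι → (Fin d → ℝ) → ℝ} {g : ι → (Fin d → ℝ) → Fin d → ℝ}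
    {H : ι → Matrix (Fin d) (Fin d) ℝ} (h : ∀ m, HasGradHessAt (f m) (g m) (H m) x) :
    HasGradHessAt (fun y => ∑ m, f m y) (fun y => ∑ m, g m y) (∑ m, H m) x where
  eventually_hasFDerivAt := (eventually_all.2 fun m => (h m).eventually_hasFDerivAt).mono
    fun y hy => by simpa [map_sum] using HasFDerivAt.fun_sum fun m _ => hy m
  hasFDerivAt_grad_apply j := by
    simp only [Finset.sum_apply]
    refine (HasFDerivAt.fun_sum fun m _ => (h m).hasFDerivAt_grad_apply j).congr_fderiv ?_
    rw [← map_sum]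
    congr 1
    ext i
    simp [Matrix.sum_apply]

theorem const_mul (h : HasGradHessAt f g H x) (c : ℝ) :
    HasGradHessAt (fun y => c * f y) (fun y => c • g y) (c • H) x where
  eventually_hasFDerivAt := h.eventually_hasFDerivAt.mono fun y hy => by
    simpa using hy.const_mul c
  hasFDerivAt_grad_apply j :=
    ((h.hasFDerivAt_grad_apply j).const_mul c).congr_fderiv (map_smul _ c _).symm

theorem neg_log (h : HasGradHessAt f g H x) (hx : f x ≠ 0) :
    HasGradHessAt (fun y => -Real.log (f y)) (fun y => -(f y)⁻¹ • g y)
      ((f x)⁻¹ • -H + (f x ^ 2)⁻¹ • vecMulVec (g x) (g x)) x where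
  eventually_hasFDerivAt := by
    have hf := h.eventually_hasFDerivAt
    filter_upwards [hf, hf.self_of_nhds.continuousAt.eventually_ne hx] with y hy hy0
    refine (hy.log hy0).neg.congr_fderiv ?_
    ext v
    simp
  hasFDerivAt_grad_apply j := by
    have hinv := (hasDerivAt_inv hx).comp_hasFDerivAt x h.eventually_hasFDerivAt.self_of_nhds
    refine (hinv.neg.mul (h.hasFDerivAt_grad_apply j)).congr_fderiv ?_
    have hrow : ((f x)⁻¹ • -H + (f x ^ 2)⁻¹ • vecMulVec (g x) (g x))ᵀ j =
        -(f x)⁻¹ • Hᵀ j + ((f x ^ 2)⁻¹ * g x j) • g x := by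
      ext i
      simp [vecMulVec_apply]
      ring
    rw [hrow, map_add, map_smul, map_smul]
    simp only [Pi.neg_apply, Function.comp_apply]
    module

end HasGradHessAt

theorem hasFDerivAt_dotProduct_mulVec_sub {A : Matrix (Fin d) (Fin d) ℝ} (hA : A.IsSymm)
    (μ y : Fin d → ℝ) :
    HasFDerivAt (fun z => (z - μ) ⬝ᵥ A *ᵥ (z - μ)) (dotProductCLM ((2 : ℝ) • A *ᵥ (y - μ))) y := by
  have hsub : HasFDerivAt (fun z : Fin d → ℝ => z - μ) (ContinuousLinearMap.id ℝ _) y :=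
    (hasFDerivAt_id y).sub_const μ
  have hlin := (LinearMap.toContinuousLinearMap A.mulVecLin).hasFDerivAt.comp y hsub
  refine (((dotProductBilin ℝ ℝ).toContinuousBilinearMap).hasFDerivAt_of_bilinear hsub
    hlin).congr_fderiv ?_
  ext v
  simp only [_root_.add_apply, ContinuousLinearMap.precompR_apply,
    ContinuousLinearMap.precompL_apply, ContinuousLinearMap.compL_apply,
    ContinuousLinearMap.comp_apply, ContinuousLinearMap.comp_id, ContinuousLinearMap.id_apply,
    LinearMap.toContinuousBilinearMap_apply, LinearMap.coe_toContinuousLinearMap',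
    Function.comp_apply, mulVecBilin_apply, dotProductBilin_apply_apply, dotProductCLM_apply,
    smul_dotProduct, smul_eq_mul]
  rw [dotProduct_mulVec, ← mulVec_transpose, hA.eq, dotProduct_comm v]
  ring

theorem hasFDerivAt_gauss {S : Matrix (Fin d) (Fin d) ℝ} (hS : S.IsSymm) (μ y : Fin d → ℝ) :
    HasFDerivAt (gauss μ S) (dotProductCLM (-gauss μ S y • S⁻¹ *ᵥ (y - μ))) y := by
  refine (((hasFDerivAt_dotProduct_mulVec_sub hS.inv μ y).const_mul (-(1 / 2))).exp.const_mul
    (((2 * Real.pi) ^ d * S.det) ^ (-(1:ℝ)/2))).congr_fderiv ?_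
  ext v
  simp [gauss]
  ring

theorem hasGradHessAt_gauss {S : Matrix (Fin d) (Fin d) ℝ} (hS : S.IsSymm) (μ x : Fin d → ℝ) :
    HasGradHessAt (gauss μ S) (fun y => -gauss μ S y • S⁻¹ *ᵥ (y - μ))
      (-(gauss μ S x • (S⁻¹ - vecMulVec (S⁻¹ *ᵥ (x - μ)) (S⁻¹ *ᵥ (x - μ))))) x where
  eventually_hasFDerivAt := Eventually.of_forall fun y => hasFDerivAt_gauss hS μ y
  hasFDerivAt_grad_apply j := by
    have hlin : HasFDerivAt (fun y => (S⁻¹ *ᵥ (y - μ)) j) (dotProductCLM (S⁻¹ j)) x :=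
      (dotProductCLM (S⁻¹ j)).hasFDerivAt.comp x ((hasFDerivAt_id x).sub_const μ)
    refine ((hasFDerivAt_gauss hS μ x).neg.mul hlin).congr_fderiv ?_
    have hrow : (-(gauss μ S x • (S⁻¹ - vecMulVec (S⁻¹ *ᵥ (x - μ)) (S⁻¹ *ᵥ (x - μ)))))ᵀ j =
        -gauss μ S x • S⁻¹ j + (gauss μ S x * (S⁻¹ *ᵥ (x - μ)) j) • S⁻¹ *ᵥ (x - μ) := by
      ext i
      simp [vecMulVec_apply, hS.inv.apply]
      ring
    rw [hrow, map_add, map_smul, map_smul, map_smul]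
    simp only [Pi.neg_apply]
    module

theorem gauss_pos {S : Matrix (Fin d) (Fin d) ℝ} (hS : 0 < S.det) (μ x : Fin d → ℝ) :
    0 < gauss μ S x :=
  mul_pos (Real.rpow_pos_of_pos (by positivity) _) (Real.exp_pos _)

theorem Matrix.posSemidef_vecMulVec_self {n : Type*} [Fintype n] (a : n → ℝ) :
    (vecMulVec a a).PosSemidef := by
  simpa [Pi.star_def] using posSemidef_vecMulVec_self_star a

theorem Matrix.PosDef.posSemidef_inv_sub_vecMulVec {n : Type*} [Fintype n] [DecidableEq n]
    {S : Matrix n n ℝ} (hS : S.PosDef) {u : n → ℝ} (h : (S - vecMulVec u u).PosSemidef) :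
    (S⁻¹ - vecMulVec (S⁻¹ *ᵥ u) (S⁻¹ *ᵥ u)).PosSemidef := by
  have hsymm : S⁻¹ᵀ = S⁻¹ := by simpa using hS.inv.isHermitian.eq
  have hconj : S⁻¹ᴴ * (S - vecMulVec u u) * S⁻¹ = S⁻¹ - vecMulVec (S⁻¹ *ᵥ u) (S⁻¹ *ᵥ u) := by
    rw [conjTranspose_eq_transpose_of_trivial, hsymm, mul_sub, sub_mul,
      nonsing_inv_mul _ hS.det_pos.ne'.isUnit, one_mul, mul_vecMulVec, vecMulVec_mul,
      ← mulVec_transpose, hsymm]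
  exact hconj ▸ h.conjTranspose_mul_mul_same S⁻¹

end

/-- If for each `i` the matrix `(Σᵢ + t·Id) - (x-xᵢ)(x-xᵢ)ᵀ` is positive semidefinite at `x`,
then the Hessian of `F(·,t) = -log f(·,t)` is positive semidefinite at `x`. -/
theorem smoothed_gmm_hessian_psd {d n : ℕ} (w : Fin n → ℝ) (hw : ∀ i, 0 ≤ w i)
    (hsum : ∑ i, w i = 1) (xs : Fin n → Fin d → ℝ)
    (Ss : Fin n → Matrix (Fin d) (Fin d) ℝ) (hS : ∀ i, (Ss i).PosSemidef)
    (t : ℝ) (ht : 0 < t) (x : Fin d → ℝ)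
    (hpsd : ∀ i, ((Ss i + t • 1) -
      Matrix.vecMulVec (x - xs i) (x - xs i)).PosSemidef) :
    (hess (fun y => -Real.log (∑ i, w i * gauss (xs i) (Ss i + t • 1) y)) x).PosSemidef := by
  have hpd i : (Ss i + t • 1).PosDef := PosDef.posSemidef_add (hS i) (PosDef.one.smul ht)
  have hgauss i := gauss_pos (hpd i).det_pos (xs i) x
  have hmix := HasGradHessAt.sum fun i =>
    (hasGradHessAt_gauss (isHermitian_iff_isSymm.1 (hpd i).isHermitian) (xs i) x).const_mul (w i)
  obtain ⟨i₀, -, hi₀⟩ := Finset.exists_ne_zero_of_sum_ne_zero (hsum ▸ one_ne_zero)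
  have hf : 0 < ∑ i, w i * gauss (xs i) (Ss i + t • 1) x :=
    Finset.sum_pos' (fun i _ => mul_nonneg (hw i) (hgauss i).le)
      ⟨i₀, Finset.mem_univ _, mul_pos ((hw i₀).lt_of_ne' hi₀) (hgauss i₀)⟩
  rw [(hmix.neg_log hf.ne').hess_eq]
  refine .add (.smul ?_ (inv_nonneg.2 hf.le))
    ((posSemidef_vecMulVec_self _).smul (inv_nonneg.2 (sq_nonneg _)))
  simp only [smul_neg, Finset.sum_neg_distrib, neg_neg]
  exact posSemidef_sum _ fun i _ =>
    (((hpd i).posSemidef_inv_sub_vecMulVec (hpsd i)).smul (hgauss i).le).smul (hw i)
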